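/- Let f : ℝ → ℝ be 2π-periodic with continuous derivative f_x satisfying ‖f_x‖₂ < ∞, let K_p ∈ ℝ, and let e : ℝ × [0,∞) → ℝ be continuously differentiable and 2π-periodic in x, satisfying e_t(x,t) + ∂_x( e(x,t) · (−V^e(x,t)) ) = −K_p e(x,t) with V^e(·,t) = f * e(·,t). Then for every t ≥ 0, d/dt ‖e(·,t)‖₂² ≤ ( −2K_p + ‖f_x‖₂ ‖e(·,t)‖₂ ) · ‖e(·,t)‖₂². -/

import Mathlib

/-!
Multiplying the equation by `2e` and integrating over a period gives
`d/dt ‖e‖₂² = -2K_p ‖e‖₂² + 2∫ e ∂ₓ(eV)`. Integrating by parts, with no boundary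
terms by periodicity, `2∫ e ∂ₓ(eV) = ∫ e² Vₓ`. Finally `Vₓ = f_x * e` is bounded pointwise
by `‖f_x‖₂ ‖e‖₂` by Cauchy–Schwarz, since translating the periodic `f_x` does not change
its `L²` norm over a period.
-/

open Real MeasureTheory Filter

/-- Circular convolution of two (2π-periodic) functions on the unit circle
`S = [-π, π]`: `(g * h)(x) = ∫_{-π}^{π} g (x - y) h y dy`. -/
noncomputable def circConv (g h : ℝ → ℝ) (x : ℝ) : ℝ :=
  ∫ y in (-Real.pi)..Real.pi, g (x - y) * h y

open Set Function Metric

theorem intervalIntegral.integral_mul_le_sqrt_mul_sqrt {μ : Measure ℝ} {a b : ℝ} (hab : a ≤ b)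
    {g h : ℝ → ℝ} (hg : IntervalIntegrable (fun x => g x ^ 2) μ a b)
    (hh : IntervalIntegrable (fun x => h x ^ 2) μ a b)
    (hgh : IntervalIntegrable (fun x => g x * h x) μ a b) :
    ∫ x in a..b, g x * h x ∂μ ≤
      √(∫ x in a..b, g x ^ 2 ∂μ) * √(∫ x in a..b, h x ^ 2 ∂μ) := by
  set A := ∫ x in a..b, g x ^ 2 ∂μ
  set B := ∫ x in a..b, g x * h x ∂μ
  set C := ∫ x in a..b, h x ^ 2 ∂μ
  have hA : 0 ≤ A := intervalIntegral.integral_nonneg_of_forall hab fun _ => sq_nonneg _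
  have hquad : ∀ r : ℝ, 0 ≤ A * (r * r) + 2 * B * r + C := fun r => calc
    0 ≤ ∫ x in a..b, (r * g x + h x) ^ 2 ∂μ :=
        intervalIntegral.integral_nonneg_of_forall hab fun _ => sq_nonneg _
    _ = ∫ x in a..b, (r ^ 2 * g x ^ 2 + 2 * r * (g x * h x)) + h x ^ 2 ∂μ := by
        congr 1; ext x; ring
    _ = A * (r * r) + 2 * B * r + C := by
        rw [intervalIntegral.integral_add ((hg.const_mul _).add (hgh.const_mul _)) hh,
          intervalIntegral.integral_add (hg.const_mul _) (hgh.const_mul _),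
          intervalIntegral.integral_const_mul, intervalIntegral.integral_const_mul]
        ring
  have hBAC : B ^ 2 ≤ A * C := by
    have := discrim_le_zero hquad
    rw [discrim] at this
    linarith
  calc B ≤ √(B ^ 2) := by rw [sqrt_sq_eq_abs]; exact le_abs_self B
    _ ≤ √(A * C) := sqrt_le_sqrt hBAC
    _ = √A * √C := sqrt_mul hA C

theorem intervalIntegral.hasDerivAt_integral_of_continuous {E : Type*} [NormedAddCommGroup E]
    [NormedSpace ℝ E] {F F' : ℝ → ℝ → E} {a b x₀ : ℝ} (hF : ∀ x, Continuous (F x))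
    (hF' : Continuous (uncurry F')) (hderiv : ∀ x y, HasDerivAt (fun x => F x y) (F' x y) x) :
    HasDerivAt (fun x => ∫ y in a..b, F x y) (∫ y in a..b, F' x₀ y) x₀ := by
  obtain ⟨C, hC⟩ := ((isCompact_closedBall x₀ 1).prod isCompact_uIcc).exists_bound_of_continuousOn
    (hF'.continuousOn (s := closedBall x₀ 1 ×ˢ uIcc a b))
  refine (intervalIntegral.hasDerivAt_integral_of_dominated_loc_of_deriv_le (bound := fun _ => C)
    (ball_mem_nhds x₀ one_pos) (.of_forall fun x => (hF x).aestronglyMeasurable)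
    ((hF x₀).intervalIntegrable a b)
    (hF'.comp (continuous_const.prodMk continuous_id)).aestronglyMeasurable ?_
    intervalIntegrable_const (.of_forall fun y _ x _ => hderiv x y)).2
  exact .of_forall fun y hy x hx =>
    hC (x, y) ⟨ball_subset_closedBall hx, uIoc_subset_uIcc hy⟩

theorem Function.Periodic.of_hasDerivAt {f f' : ℝ → ℝ} {c : ℝ} (hf : Periodic f c)
    (hf' : ∀ x, HasDerivAt f (f' x) x) : Periodic f' c := by
  intro x
  have hshift : HasDerivAt (fun z => f (z + c)) (f' (x + c)) x := by
    simpa using (hf' (x + c)).comp_add_const x c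
  rw [show (fun z => f (z + c)) = f from funext hf] at hshift
  exact hshift.unique (hf' x)

section PartialDerivatives

variable {E : Type*} [NormedAddCommGroup E] [NormedSpace ℝ E] {e : ℝ → ℝ → E}

theorem hasDerivAt_fderiv_apply_fst (he : Differentiable ℝ fun p : ℝ × ℝ => e p.1 p.2)
    (x s : ℝ) :
    HasDerivAt (fun z => e z s) (fderiv ℝ (fun p : ℝ × ℝ => e p.1 p.2) (x, s) (1, 0)) x :=
  (he (x, s)).hasFDerivAt.comp_hasDerivAt (f := fun z : ℝ => (z, s)) x
    ((hasDerivAt_id x).prodMk (hasDerivAt_const x s))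

theorem hasDerivAt_deriv_fst (he : Differentiable ℝ fun p : ℝ × ℝ => e p.1 p.2) (x s : ℝ) :
    HasDerivAt (fun z => e z s) (deriv (fun z => e z s) x) x :=
  (hasDerivAt_fderiv_apply_fst he x s).differentiableAt.hasDerivAt

theorem hasDerivAt_deriv_snd (he : Differentiable ℝ fun p : ℝ × ℝ => e p.1 p.2) (x s : ℝ) :
    HasDerivAt (fun u => e x u) (deriv (fun u => e x u) s) s :=
  hasDerivAt_deriv_fst (e := fun s x => e x s)
    (he.comp (differentiable_snd.prodMk differentiable_fst)) s x

theorem continuous_deriv_fst (he : ContDiff ℝ 1 fun p : ℝ × ℝ => e p.1 p.2) :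
    Continuous fun p : ℝ × ℝ => deriv (fun z => e z p.2) p.1 := by
  have hdiff := he.differentiable one_ne_zero
  simp_rw [fun p : ℝ × ℝ => (hasDerivAt_fderiv_apply_fst hdiff p.1 p.2).deriv]
  exact (he.continuous_fderiv one_ne_zero).clm_apply continuous_const

theorem continuous_deriv_snd (he : ContDiff ℝ 1 fun p : ℝ × ℝ => e p.1 p.2) :
    Continuous fun p : ℝ × ℝ => deriv (fun s => e p.1 s) p.2 :=
  (continuous_deriv_fst (e := fun s x => e x s)
    (he.comp (contDiff_snd.prodMk contDiff_fst))).comp continuous_swap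

end PartialDerivatives

theorem hasDerivAt_integral_sq {e : ℝ → ℝ → ℝ} (he : ContDiff ℝ 1 fun p : ℝ × ℝ => e p.1 p.2)
    (a b t : ℝ) :
    HasDerivAt (fun s => ∫ x in a..b, e x s ^ 2)
      (∫ x in a..b, 2 * e x t * deriv (fun s => e x s) t) t := by
  refine intervalIntegral.hasDerivAt_integral_of_continuous (F := fun s x => e x s ^ 2)
    (F' := fun s x => 2 * e x s * deriv (fun s => e x s) s)
    (fun s => (he.continuous.comp (continuous_id.prodMk continuous_const)).pow 2) ?_
    fun s x => ?_
  · exact ((continuous_const.mul (he.continuous.comp continuous_swap)).mul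
      ((continuous_deriv_snd he).comp continuous_swap))
  · exact ((hasDerivAt_deriv_snd (he.differentiable one_ne_zero) x s).fun_pow 2).congr_deriv
      (by norm_num)

section CircConv

variable {g g' h : ℝ → ℝ}

theorem continuous_circConv (hg : Continuous g) (hh : Continuous h) : Continuous (circConv g h) :=
  intervalIntegral.continuous_parametric_intervalIntegral_of_continuous'
    ((hg.comp (continuous_fst.sub continuous_snd)).mul (hh.comp continuous_snd)) _ _

theorem hasDerivAt_circConv (hg : ∀ x, HasDerivAt g (g' x) x) (hg' : Continuous g')
    (hh : Continuous h) (x : ℝ) : HasDerivAt (circConv g h) (circConv g' h x) x := by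
  have hgc : Continuous g := continuous_iff_continuousAt.2 fun x => (hg x).continuousAt
  exact intervalIntegral.hasDerivAt_integral_of_continuous (F' := fun x y => g' (x - y) * h y)
    (fun x => (hgc.comp (continuous_const.sub continuous_id)).mul hh)
    ((hg'.comp (continuous_fst.sub continuous_snd)).mul (hh.comp continuous_snd))
    fun x y => ((hg (x - y)).comp_sub_const x y).mul_const (h y)

theorem Function.Periodic.circConv {c : ℝ} (hg : Periodic g c) : Periodic (circConv g h) c := by
  intro x
  unfold _root_.circConv
  congr 1 with y
  rw [add_sub_right_comm, hg]

theorem circConv_le_sqrt_mul_sqrt (hg : Periodic g (2 * π)) (hgc : Continuous g)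
    (hh : Continuous h) (x : ℝ) :
    circConv g h x ≤ √(∫ y in (-π)..π, g y ^ 2) * √(∫ y in (-π)..π, h y ^ 2) := by
  have hg_shift : ∫ y in (-π)..π, g (x - y) ^ 2 = ∫ y in (-π)..π, g y ^ 2 := by
    rw [intervalIntegral.integral_comp_sub_left (fun y => g y ^ 2) x]
    have := (hg.comp fun y => y ^ 2).intervalIntegral_add_eq (x - π) (-π)
    simp only [comp_apply] at this
    convert this using 2 <;> ring
  rw [← hg_shift]
  have hgx : Continuous fun y => g (x - y) := hgc.comp (continuous_const.sub continuous_id)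
  exact intervalIntegral.integral_mul_le_sqrt_mul_sqrt (by linarith [pi_pos])
    ((hgx.pow 2).intervalIntegrable _ _) ((hh.pow 2).intervalIntegrable _ _)
    ((hgx.mul hh).intervalIntegrable _ _)

end CircConv

theorem integral_two_mul_mul_deriv_mul_eq {u u' V V' : ℝ → ℝ} {a b : ℝ}
    (hu : ∀ x, HasDerivAt u (u' x) x) (hV : ∀ x, HasDerivAt V (V' x) x)
    (hu' : Continuous u') (hV' : Continuous V') (hua : u a = u b) (hVa : V a = V b) :
    ∫ x in a..b, 2 * u x * (u' x * V x + u x * V' x) = ∫ x in a..b, u x ^ 2 * V' x := by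
  have huc : Continuous u := continuous_iff_continuousAt.2 fun x => (hu x).continuousAt
  have hVc : Continuous V := continuous_iff_continuousAt.2 fun x => (hV x).continuousAt
  have hparts : ∫ x in a..b, u' x * (u x * V x) + u x * (u' x * V x + u x * V' x) = 0 := by
    rw [intervalIntegral.integral_deriv_mul_eq_sub (fun x _ => hu x)
      (fun x _ => (hu x).fun_mul (hV x)) (hu'.intervalIntegrable _ _)
      (((hu'.mul hVc).add (huc.mul hV')).intervalIntegrable _ _), hua, hVa, sub_self]
  calc ∫ x in a..b, 2 * u x * (u' x * V x + u x * V' x)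
      = ∫ x in a..b, (u' x * (u x * V x) + u x * (u' x * V x + u x * V' x)) + u x ^ 2 * V' x := by
        congr 1 with x; ring
    _ = ∫ x in a..b, u x ^ 2 * V' x := by
        rw [intervalIntegral.integral_add (Continuous.intervalIntegrable (by fun_prop) _ _)
          (Continuous.intervalIntegrable (by fun_prop) _ _), hparts, zero_add]

theorem integral_two_mul_mul_le_of_reaction_transport {u u' V V' ut : ℝ → ℝ} {K M a b : ℝ}
    (hab : a ≤ b) (hu : ∀ x, HasDerivAt u (u' x) x) (hV : ∀ x, HasDerivAt V (V' x) x)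
    (hu' : Continuous u') (hV' : Continuous V') (hua : u a = u b) (hVa : V a = V b)
    (hut : ∀ x, ut x = -K * u x + (u' x * V x + u x * V' x)) (hV'_le : ∀ x, V' x ≤ M) :
    ∫ x in a..b, 2 * u x * ut x ≤ (-(2 * K) + M) * ∫ x in a..b, u x ^ 2 := by
  have huc : Continuous u := continuous_iff_continuousAt.2 fun x => (hu x).continuousAt
  have hVc : Continuous V := continuous_iff_continuousAt.2 fun x => (hV x).continuousAt
  calc ∫ x in a..b, 2 * u x * ut x
      = ∫ x in a..b, -(2 * K) * u x ^ 2 + 2 * u x * (u' x * V x + u x * V' x) := by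
        congr 1 with x; rw [hut]; ring
    _ = -(2 * K) * (∫ x in a..b, u x ^ 2) + ∫ x in a..b, u x ^ 2 * V' x := by
        rw [intervalIntegral.integral_add (Continuous.intervalIntegrable (by fun_prop) _ _)
          (Continuous.intervalIntegrable (by fun_prop) _ _), intervalIntegral.integral_const_mul,
          integral_two_mul_mul_deriv_mul_eq hu hV hu' hV' hua hVa]
    _ ≤ -(2 * K) * (∫ x in a..b, u x ^ 2) + ∫ x in a..b, u x ^ 2 * M := by
        gcongr
        exact intervalIntegral.integral_mono_on hab
          (Continuous.intervalIntegrable (by fun_prop) _ _)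
          (Continuous.intervalIntegrable (by fun_prop) _ _)
          fun x _ => mul_le_mul_of_nonneg_left (hV'_le x) (sq_nonneg _)
    _ = (-(2 * K) + M) * ∫ x in a..b, u x ^ 2 := by
        rw [intervalIntegral.integral_mul_const]; ring

/-- If `e` satisfies `e_t + ∂_x(e · (−V^e)) = −K_p e` with
`V^e = f * e`, then for every `t ≥ 0`,
`d/dt ‖e(·,t)‖₂² ≤ (−2K_p + ‖f_x‖₂ ‖e(·,t)‖₂) ‖e(·,t)‖₂²`. -/
theorem stmt7 (f f' : ℝ → ℝ) (Kp : ℝ) (e : ℝ → ℝ → ℝ)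
    (hf_per : Function.Periodic f (2 * π))
    (hf' : ∀ x, HasDerivAt f (f' x) x)
    (hf'_cont : Continuous f')
    (he_smooth : ContDiff ℝ 1 fun p : ℝ × ℝ => e p.1 p.2)
    (he_per : ∀ x t : ℝ, e (x + 2 * π) t = e x t)
    (hpde : ∀ x t : ℝ, 0 ≤ t →
      deriv (fun s => e x s) t
          + deriv (fun z => e z t * (-(circConv f (fun y => e y t) z))) x
        = -Kp * e x t) :
    ∀ t : ℝ, 0 ≤ t → ∃ d : ℝ,
      HasDerivAt (fun s => ∫ x in (-π)..π, (e x s) ^ 2) d t ∧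
      d ≤ (-(2 * Kp)
            + Real.sqrt (∫ x in (-π)..π, (f' x) ^ 2)
                * Real.sqrt (∫ x in (-π)..π, (e x t) ^ 2))
          * (∫ x in (-π)..π, (e x t) ^ 2) := by
  intro t ht
  set u : ℝ → ℝ := fun x => e x t
  set u' : ℝ → ℝ := fun x => deriv (fun z => e z t) x
  set V := circConv f u
  set V' := circConv f' u
  have huc : Continuous u := he_smooth.continuous.comp (continuous_id.prodMk continuous_const)
  have hu : ∀ x, HasDerivAt u (u' x) x :=
    fun x => hasDerivAt_deriv_fst (he_smooth.differentiable one_ne_zero) x t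
  have hu' : Continuous u' :=
    (continuous_deriv_fst he_smooth).comp (continuous_id.prodMk continuous_const)
  have hV : ∀ x, HasDerivAt V (V' x) x := hasDerivAt_circConv hf' hf'_cont huc
  have hboundary : ∀ w : ℝ → ℝ, Periodic w (2 * π) → w (-π) = w π := fun w hw => by
    simpa [show -π + 2 * π = π by ring] using (hw (-π)).symm
  have hevol : ∀ x, deriv (fun s => e x s) t = -Kp * u x + (u' x * V x + u x * V' x) := by
    intro x
    have := hpde x t ht
    rw [((hu x).fun_mul (hV x).fun_neg).deriv] at this
    linarith
  exact ⟨_, hasDerivAt_integral_sq he_smooth (-π) π t,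
    integral_two_mul_mul_le_of_reaction_transport (by linarith [pi_pos]) hu hV hu'
      (continuous_circConv hf'_cont huc) (hboundary u fun x => he_per x t)
      (hboundary V hf_per.circConv) hevol
      (circConv_le_sqrt_mul_sqrt (hf_per.of_hasDerivAt hf') hf'_cont huc)⟩
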